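/- arXiv:1001.1894 — 2 statements merged into one kernel-verified Lean document; each statement's English description precedes it below -/
import Mathlib

section
/- For any α, β > 0, the total variation distance between the Poisson distribution with mean α and the Poisson distribution with mean β is at most 1 − exp(−|α − β|), and in particular at most |α − β|. -/
/-!
For `a ≤ b` the sequence `exp (-b) * a ^ m / m!` lies below both Poisson weights
(`exp (-b) ≤ exp (-a)` and `a ^ m ≤ b ^ m`) and has total mass `exp (a - b)`. Since
`|x - y| = x + y - 2 min x y`, the `ℓ¹` distance of the two weight sequences is at most
`2 (1 - exp (a - b))`. The second inequality is `1 + t ≤ exp t`.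
-/

open Real

theorem hasSum_mul_pow_div_factorial (c a : ℝ) :
    HasSum (fun m : ℕ => c * a ^ m / m.factorial) (c * exp a) := by
  simpa only [mul_div_assoc, exp_eq_exp_ℝ] using
    (NormedSpace.expSeries_div_hasSum_exp a).mul_left c

theorem tsum_abs_sub_le_of_le {ι : Type*} {x y c : ι → ℝ} {s t u : ℝ}
    (hx : HasSum x s) (hy : HasSum y t) (hc : HasSum c u) (hcx : c ≤ x) (hcy : c ≤ y) :
    ∑' i, |x i - y i| ≤ s + t - 2 * u := by
  have hpt : ∀ i, |x i - y i| ≤ x i + y i - 2 * c i := fun i => by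
    rw [abs_sub_le_iff]
    constructor <;> linarith [hcx i, hcy i]
  have hbound : HasSum (fun i => x i + y i - 2 * c i) (s + t - 2 * u) :=
    (hx.add hy).sub (hc.mul_left 2)
  have hsum : Summable fun i => |x i - y i| :=
    .of_nonneg_of_le (fun i => abs_nonneg _) hpt hbound.summable
  exact hasSum_le hpt hsum.hasSum hbound

theorem tsum_abs_sub_poisson_le {a b : ℝ} (ha : 0 ≤ a) (hab : a ≤ b) :
    ∑' m : ℕ, |exp (-a) * a ^ m / m.factorial - exp (-b) * b ^ m / m.factorial|
      ≤ 2 * (1 - exp (a - b)) := by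
  have hcx : (fun m : ℕ => exp (-b) * a ^ m / m.factorial)
      ≤ fun m => exp (-a) * a ^ m / m.factorial := fun m => by dsimp only; gcongr
  have hcy : (fun m : ℕ => exp (-b) * a ^ m / m.factorial)
      ≤ fun m => exp (-b) * b ^ m / m.factorial := fun m => by dsimp only; gcongr
  have hmass (r : ℝ) : exp (-r) * exp r = 1 := by rw [← exp_add, neg_add_cancel, exp_zero]
  have key := tsum_abs_sub_le_of_le (hasSum_mul_pow_div_factorial _ a)
    (hasSum_mul_pow_div_factorial _ b) (hasSum_mul_pow_div_factorial _ a) hcx hcy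
  rw [hmass, hmass, ← exp_add, neg_add_eq_sub] at key
  linarith

/-- For `α, β > 0`, the total variation distance between `Po(α)` and `Po(β)`
is at most `1 - exp (-|α - β|)`, which in turn is at most `|α - β|`. -/
theorem tv_poisson_le (α β : ℝ) (hα : 0 < α) (hβ : 0 < β) :
    (1 / 2) * (∑' m : ℕ,
        |Real.exp (-α) * α ^ m / m.factorial - Real.exp (-β) * β ^ m / m.factorial|)
      ≤ 1 - Real.exp (-|α - β|) ∧
    1 - Real.exp (-|α - β|) ≤ |α - β| := by
  refine ⟨?_, by linarith [add_one_le_exp (-|α - β|)]⟩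
  wlog hαβ : α ≤ β generalizing α β
  · simpa only [abs_sub_comm] using this β α hβ hα (le_of_not_ge hαβ)
  rw [abs_of_nonpos (sub_nonpos.2 hαβ), neg_neg]
  linarith [tsum_abs_sub_poisson_le hα.le hαβ]
end

section
/- Let π' be a uniformly random permutation of {1,...,n} and let γ be defined by γ = π' if π' is even, and γ = (1 2) ∘ π' otherwise. Then γ is uniformly distributed on the alternating group A_n, and the probability that the multiset of cycle lengths ≤ K of γ differs from that of π' is at most 4K/n. -/
/-!
Left multiplication by `(1 2)` exchanges even and odd permutations, so `γ` is uniform on `A_n`.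
If `π` is odd then `γ = (1 2) π`, and every cycle of `π` avoiding `1` and `2` is also a cycle of
`γ` (and conversely, as `π = (1 2) γ`). So the short cycles of `γ` and `π` can differ only if `1`
or `2` lies in a cycle of length `≤ K` of `π` or of `(1 2) π`. For each point `x`, at most
`K (n-1)!` permutations put `x` in a cycle of length `≤ K`. This goes by induction on `K`:
splicing `x` out of its cycle, `σ ↦ (σ x, (x σx) σ)`, maps the permutations moving `x` with a
cycle of length `≤ K + 1` injectively to pairs `(y, τ)` where `τ` fixes `x` and puts `y ≠ x` in a
cycle of length `≤ K`, i.e. to the same problem on one point fewer.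
-/

open MeasureTheory ProbabilityTheory Finset Equiv Equiv.Perm Nat
open scoped ENNReal

namespace Equiv.Perm

variable {α : Type*} [DecidableEq α]

theorem swap_mul_mem_permsOfFinset_erase {σ : Perm α} {s : Finset α} (hσ : σ ∈ permsOfFinset s)
    {x : α} (hx : x ∈ s) : swap x (σ x) * σ ∈ permsOfFinset (s.erase x) := by
  rw [mem_perms_of_finset_iff] at hσ ⊢
  intro z hz
  refine mem_erase.2 ⟨fun h => hz (by simp [h]), ?_⟩
  by_cases hσz : σ z = z
  · rw [mul_apply, hσz] at hz
    obtain rfl : z = x := by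
      by_contra hzx
      refine hz (swap_apply_of_ne_of_ne hzx fun h => hzx ?_)
      rw [h] at hσz ⊢
      exact σ.injective hσz
    exact hx
  · exact hσ hσz

theorem mem_permsOfFinset_erase {σ : Perm α} {s : Finset α} (hσ : σ ∈ permsOfFinset s)
    {x : α} (hx : σ x = x) : σ ∈ permsOfFinset (s.erase x) := by
  rw [mem_perms_of_finset_iff] at hσ ⊢
  exact fun hz => mem_erase.2 ⟨fun h => hz (h ▸ hx), hσ hz⟩

variable [Fintype α]

theorem support_cycleOf_subset_of_mapsTo {τ : Perm α} {t : Finset α} (ht : Set.MapsTo τ t t)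
    {z : α} (hz : z ∈ t) : (τ.cycleOf z).support ⊆ t := by
  intro w hw
  obtain ⟨i, -, rfl⟩ := ((mem_support_cycleOf_iff.1 hw).1).exists_pow_eq'
  rw [← iterate_eq_pow]
  exact ht.iterate i hz

theorem mapsTo_swap_mul_support_cycleOf_erase {σ : Perm α} {x : α} (hx : σ x ≠ x) :
    Set.MapsTo (swap x (σ x) * σ) ((σ.cycleOf x).support.erase x)
      ((σ.cycleOf x).support.erase x) := by
  intro z hz
  simp only [coe_erase, Set.mem_sdiff, mem_coe, mem_support_cycleOf_iff,
    Set.mem_singleton_iff] at hz ⊢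
  obtain ⟨⟨hxz, hx'⟩, hzx⟩ := hz
  have hσz : σ z ≠ σ x := σ.injective.ne hzx
  rw [mul_apply]
  by_cases hσzx : σ z = x
  · rw [hσzx, swap_apply_left]
    exact ⟨⟨SameCycle.refl _ _ |>.apply_right, hx'⟩, hx⟩
  · rw [swap_apply_of_ne_of_ne hσzx hσz]
    exact ⟨⟨hxz.apply_right, hx'⟩, hσzx⟩

theorem card_support_cycleOf_swap_mul_lt {σ : Perm α} {x : α} (hx : σ x ≠ x) :
    #((swap x (σ x) * σ).cycleOf (σ x)).support < #(σ.cycleOf x).support := by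
  have hx' : x ∈ (σ.cycleOf x).support := mem_support_cycleOf_iff.2 ⟨.refl _ _, mem_support.2 hx⟩
  refine (card_le_card (support_cycleOf_subset_of_mapsTo
    (mapsTo_swap_mul_support_cycleOf_erase hx) ?_)).trans_lt (card_erase_lt_of_mem hx')
  exact mem_erase.2
    ⟨hx, mem_support_cycleOf_iff.2 ⟨SameCycle.refl _ _ |>.apply_right, mem_support.2 hx⟩⟩

theorem card_filter_permsOfFinset_moves_le_sum (K : ℕ) {s : Finset α} {x : α} (hx : x ∈ s) :
    #{σ ∈ permsOfFinset s | σ x ≠ x ∧ #(σ.cycleOf x).support ≤ K + 1} ≤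
      ∑ y ∈ s.erase x, #{τ ∈ permsOfFinset (s.erase x) | #(τ.cycleOf y).support ≤ K} := by
  rw [← card_sigma]
  refine card_le_card_of_injOn (fun σ => ⟨σ x, swap x (σ x) * σ⟩) (fun σ hσ => ?_) ?_
  · rw [mem_coe, mem_filter] at hσ
    obtain ⟨hσs, hσx, hlen⟩ := hσ
    have hlt := card_support_cycleOf_swap_mul_lt hσx
    simp only [coe_sigma, Set.mem_sigma_iff, mem_coe, mem_erase, mem_filter]
    refine ⟨⟨hσx, ?_⟩, swap_mul_mem_permsOfFinset_erase hσs hx, by omega⟩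
    exact mem_perms_of_finset_iff.1 hσs (σ.injective.ne hσx)
  · intro σ _ σ' _ h
    simp only [Sigma.mk.injEq] at h
    obtain ⟨h1, h2⟩ := h
    rw [h1, heq_iff_eq] at h2
    exact mul_left_cancel h2

theorem card_filter_permsOfFinset_cycleOf_le {K : ℕ} (hK : 1 ≤ K) {s : Finset α} {x : α}
    (hx : x ∈ s) : #{σ ∈ permsOfFinset s | #(σ.cycleOf x).support ≤ K} ≤ K * (#s - 1)! := by
  induction K, hK using Nat.le_induction generalizing s x with
  | base =>
    rw [one_mul, ← card_erase_of_mem hx, ← card_perms_of_finset]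
    refine card_le_card fun σ hσ => ?_
    rw [mem_filter] at hσ
    refine mem_permsOfFinset_erase hσ.1 (not_not.1 fun hσx => ?_)
    have := two_le_card_support_cycleOf_iff.2 hσx
    omega
  | succ K hK ih =>
    have hsplit : {σ ∈ permsOfFinset s | #(σ.cycleOf x).support ≤ K + 1} ⊆
        permsOfFinset (s.erase x) ∪
          {σ ∈ permsOfFinset s | σ x ≠ x ∧ #(σ.cycleOf x).support ≤ K + 1} := by
      intro σ hσ
      rw [mem_filter] at hσ
      by_cases hσx : σ x = x
      · exact mem_union_left _ (mem_permsOfFinset_erase hσ.1 hσx)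
      · exact mem_union_right _ (mem_filter.2 ⟨hσ.1, hσx, hσ.2⟩)
    have hmoved := (card_filter_permsOfFinset_moves_le_sum K hx).trans
      (sum_le_card_nsmul _ _ _ fun y hy => ih hy)
    rw [card_erase_of_mem hx, smul_eq_mul] at hmoved
    have hfact : (#s - 1) * (#s - 1 - 1)! ≤ (#s - 1)! := by
      rcases Nat.eq_zero_or_pos (#s - 1) with h | h
      · simp [h]
      · exact (mul_factorial_pred h.ne').le
    calc _ ≤ #(permsOfFinset (s.erase x)) +
          #{σ ∈ permsOfFinset s | σ x ≠ x ∧ #(σ.cycleOf x).support ≤ K + 1} :=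
          (card_le_card hsplit).trans (card_union_le _ _)
      _ ≤ (#s - 1)! + K * ((#s - 1) * (#s - 1 - 1)!) := by
        rw [card_perms_of_finset, card_erase_of_mem hx, mul_left_comm]
        exact Nat.add_le_add_left hmoved _
      _ ≤ (K + 1) * (#s - 1)! := by nlinarith

theorem card_filter_cycleOf_le {K : ℕ} (hK : 1 ≤ K) (x : α) :
    #{σ : Perm α | #(σ.cycleOf x).support ≤ K} ≤ K * (Fintype.card α - 1)! := by
  have huniv : permsOfFinset (univ : Finset α) = univ :=
    eq_univ_of_forall fun σ => mem_perms_of_finset_iff.2 fun _ => mem_univ _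
  simpa [huniv] using card_filter_permsOfFinset_cycleOf_le hK (mem_univ x)

theorem mem_cycleFactorsFinset_swap_mul {σ c : Perm α} {a b : α}
    (hc : c ∈ σ.cycleFactorsFinset) (ha : a ∉ c.support) (hb : b ∉ c.support) :
    c ∈ (swap a b * σ).cycleFactorsFinset := by
  rw [mem_cycleFactorsFinset_iff] at hc ⊢
  refine ⟨hc.1, fun z hz => ?_⟩
  have hcz : c z ∈ c.support := apply_mem_support.2 hz
  rw [hc.2 z hz] at hcz
  rw [mul_apply, swap_apply_of_ne_of_ne (ne_of_mem_of_not_mem hcz ha)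
    (ne_of_mem_of_not_mem hcz hb), hc.2 z hz]

theorem filter_cycleFactorsFinset_subset_swap_mul {K : ℕ} {σ : Perm α} {a b : α}
    (ha : K < #(σ.cycleOf a).support) (hb : K < #(σ.cycleOf b).support) :
    {c ∈ σ.cycleFactorsFinset | #c.support ≤ K} ⊆
      {c ∈ (swap a b * σ).cycleFactorsFinset | #c.support ≤ K} := by
  intro c hc
  rw [mem_filter] at hc ⊢
  obtain ⟨hcσ, hcK⟩ := hc
  have hnot : ∀ x, K < #(σ.cycleOf x).support → x ∉ c.support := fun x hx hxc => by
    rw [← cycle_is_cycleOf hxc hcσ] at hx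
    omega
  exact ⟨mem_cycleFactorsFinset_swap_mul hcσ (hnot a ha) (hnot b hb), hcK⟩

theorem filter_cycleType_swap_mul_eq {K : ℕ} {σ : Perm α} {a b : α}
    (ha : K < #(σ.cycleOf a).support) (hb : K < #(σ.cycleOf b).support)
    (ha' : K < #((swap a b * σ).cycleOf a).support)
    (hb' : K < #((swap a b * σ).cycleOf b).support) :
    (swap a b * σ).cycleType.filter (· ≤ K) = σ.cycleType.filter (· ≤ K) := by
  have hfilter : ∀ ρ : Perm α, ρ.cycleType.filter (· ≤ K) =
      ({c ∈ ρ.cycleFactorsFinset | #c.support ≤ K}).val.map (card ∘ support) := fun ρ => by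
    rw [cycleType_def, Multiset.filter_map]
    rfl
  have hback := filter_cycleFactorsFinset_subset_swap_mul (a := a) (b := b) ha' hb'
  rw [swap_mul_self_mul] at hback
  rw [hfilter, hfilter, Subset.antisymm hback (filter_cycleFactorsFinset_subset_swap_mul ha hb)]

theorem card_filter_cycleType_swap_mul_ne_le {K : ℕ} (hK : 1 ≤ K) (a b : α) :
    #{σ : Perm α | (swap a b * σ).cycleType.filter (· ≤ K) ≠ σ.cycleType.filter (· ≤ K)} ≤
      4 * K * (Fintype.card α - 1)! := by
  set T : Finset (Perm α) :=
    {σ : Perm α | #(σ.cycleOf a).support ≤ K ∨ #(σ.cycleOf b).support ≤ K}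
  have hT : #T ≤ 2 * (K * (Fintype.card α - 1)!) := by
    rw [two_mul]
    refine (card_le_card (filter_or _ _ _).le).trans <| (card_union_le _ _).trans ?_
    exact Nat.add_le_add (card_filter_cycleOf_le hK a) (card_filter_cycleOf_le hK b)
  have hsub : ({σ : Perm α | (swap a b * σ).cycleType.filter (· ≤ K) ≠
      σ.cycleType.filter (· ≤ K)} : Finset (Perm α)) ⊆ T ∪ T.image (swap a b * ·) := by
    intro σ hσ
    rw [mem_filter] at hσ
    by_contra hσT
    simp only [T, mem_union, mem_image, mem_filter, mem_univ, true_and, not_or, not_le,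
      not_exists, not_and] at hσT
    obtain ⟨⟨ha, hb⟩, hswap⟩ := hσT
    have hlong := hswap (swap a b * σ)
    simp only [swap_mul_self_mul, not_true, imp_false, not_or, not_le] at hlong
    exact hσ.2 (filter_cycleType_swap_mul_eq ha hb hlong.1 hlong.2)
  calc _ ≤ #T + #T := (card_le_card hsub).trans
        ((card_union_le _ _).trans (Nat.add_le_add_left card_image_le _))
    _ ≤ 4 * K * (Fintype.card α - 1)! := by linarith

def swapIfOdd (a b : α) (σ : Perm α) : Perm α :=
  if sign σ = 1 then σ else swap a b * σ

theorem swapIfOdd_mem_alternatingGroup {a b : α} (hab : a ≠ b) (σ : Perm α) :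
    swapIfOdd a b σ ∈ alternatingGroup α := by
  rw [mem_alternatingGroup, swapIfOdd]
  split_ifs with hσ
  · exact hσ
  · rw [sign_mul, sign_swap hab, Int.units_ne_iff_eq_neg.1 hσ]
    rfl

theorem swapIfOdd_eq_iff {a b : α} (hab : a ≠ b) {σ τ : Perm α} (hτ : τ ∈ alternatingGroup α) :
    swapIfOdd a b σ = τ ↔ σ ∈ ({τ, swap a b * τ} : Finset (Perm α)) := by
  rw [mem_alternatingGroup] at hτ
  have hodd : sign (swap a b * τ) ≠ 1 := by
    rw [sign_mul, sign_swap hab, hτ]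
    decide
  rw [mem_insert, mem_singleton, swapIfOdd]
  constructor
  · split_ifs
    · exact Or.inl
    · rintro rfl
      exact Or.inr (swap_mul_self_mul a b σ).symm
  · rintro (rfl | rfl)
    · rw [if_pos hτ]
    · rw [if_neg hodd, swap_mul_self_mul]

theorem card_pair_swap_mul {a b : α} (hab : a ≠ b) (τ : Perm α) :
    #({τ, swap a b * τ} : Finset (Perm α)) = 2 :=
  card_pair fun h => hab (swap_eq_one_iff.1 (right_eq_mul.1 h))

end Equiv.Perm

namespace MeasureTheory

variable {Ω β : Type*} [MeasurableSpace Ω] {μ : Measure Ω} [IsProbabilityMeasure μ]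
  [Fintype β] [DecidableEq β] {X : Ω → β}

/-- No measurability of `X` is needed: the level sets cover `Ω` and have total mass `1`, so
subadditivity of the outer measure gives both inequalities. -/
theorem measure_preimage_finset_eq_sum (hX : ∑ b, μ {ω | X ω = b} = 1) (S : Finset β) :
    μ {ω | X ω ∈ S} = ∑ b ∈ S, μ {ω | X ω = b} := by
  have hle : ∀ S : Finset β, μ {ω | X ω ∈ S} ≤ ∑ b ∈ S, μ {ω | X ω = b} := fun S =>
    calc μ {ω | X ω ∈ S} ≤ μ (⋃ b ∈ S, {ω | X ω = b}) :=
          measure_mono fun ω (hω : X ω ∈ S) => Set.mem_biUnion hω rfl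
      _ ≤ _ := measure_biUnion_finset_le _ _
  refine (hle S).antisymm ?_
  have hcompl : ∑ b ∈ Sᶜ, μ {ω | X ω = b} ≠ ∞ :=
    ne_top_of_le_ne_top ENNReal.one_ne_top (hX ▸ sum_le_univ_sum_of_nonneg (by simp))
  refine (ENNReal.add_le_add_iff_right hcompl).1 ?_
  calc ∑ b ∈ S, μ {ω | X ω = b} + ∑ b ∈ Sᶜ, μ {ω | X ω = b} = μ Set.univ := by
        rw [sum_add_sum_compl, hX, measure_univ]
    _ ≤ μ {ω | X ω ∈ S} + μ {ω | X ω ∈ Sᶜ} :=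
        (measure_mono fun ω _ => by by_cases h : X ω ∈ S <;> simp [h]).trans
          (measure_union_le _ _)
    _ ≤ μ {ω | X ω ∈ S} + ∑ b ∈ Sᶜ, μ {ω | X ω = b} := add_le_add le_rfl (hle Sᶜ)

theorem measure_preimage_finset_of_uniform [Nonempty β]
    (hX : ∀ b, μ {ω | X ω = b} = (Fintype.card β : ℝ≥0∞)⁻¹) (S : Finset β) :
    μ {ω | X ω ∈ S} = #S * (Fintype.card β : ℝ≥0∞)⁻¹ := by
  have hsum : ∑ b, μ {ω | X ω = b} = 1 := by
    simp only [hX, sum_const, nsmul_eq_mul]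
    exact ENNReal.mul_inv_cancel (by simp) (by simp)
  simp [measure_preimage_finset_eq_sum hsum, hX]

end MeasureTheory

/-- Let `π'` be a uniformly random permutation of `{1,…,n}` and set
`γ = π'` if `π'` is even, `γ = (1 2) ∘ π'` otherwise.  Then `γ` always lies in the
alternating group, `γ` is uniform on `A_n` (each even permutation has probability
`2/n!`), and the probability that the multiset of cycle lengths `≤ K` of `γ` differs
from that of `π'` is at most `4K/n`. -/
theorem uniform_alternating_coupling (n K : ℕ) (hn : 2 ≤ n) (hK : 1 ≤ K)
    (Ω : Type) [MeasureSpace Ω] [IsProbabilityMeasure (ℙ : Measure Ω)]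
    (π : Ω → Equiv.Perm (Fin n))
    (hπ : ∀ σ : Equiv.Perm (Fin n), ℙ {ω | π ω = σ} = ((n.factorial : ℝ≥0∞))⁻¹)
    (g : Ω → Equiv.Perm (Fin n))
    (hg : ∀ ω, g ω =
      if Equiv.Perm.sign (π ω) = 1 then π ω
      else Equiv.swap (⟨0, by omega⟩ : Fin n) (⟨1, by omega⟩ : Fin n) * π ω) :
    (∀ ω, g ω ∈ alternatingGroup (Fin n)) ∧
    (∀ σ ∈ alternatingGroup (Fin n),
      ℙ {ω | g ω = σ} = 2 * ((n.factorial : ℝ≥0∞))⁻¹) ∧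
    ℙ {ω | Multiset.filter (fun m => m ≤ K) (g ω).cycleType
          ≠ Multiset.filter (fun m => m ≤ K) (π ω).cycleType}
      ≤ ENNReal.ofReal (4 * K / n) := by
  set a : Fin n := ⟨0, by omega⟩
  set b : Fin n := ⟨1, by omega⟩
  have hab : a ≠ b := by simp [a, b, Fin.ext_iff]
  obtain rfl : g = fun ω => swapIfOdd a b (π ω) := funext hg
  have hπ' : ∀ σ, ℙ {ω | π ω = σ} = (Fintype.card (Perm (Fin n)) : ℝ≥0∞)⁻¹ := by
    simpa [Fintype.card_perm] using hπ
  have hprob := measure_preimage_finset_of_uniform hπ'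
  rw [Fintype.card_perm, Fintype.card_fin] at hprob
  refine ⟨fun ω => swapIfOdd_mem_alternatingGroup hab (π ω), fun σ hσ => ?_, ?_⟩
  · simp_rw [swapIfOdd_eq_iff hab hσ, hprob, card_pair_swap_mul hab, Nat.cast_ofNat]
  · set Bad : Finset (Perm (Fin n)) := {σ | (swap a b * σ).cycleType.filter (· ≤ K) ≠
      σ.cycleType.filter (· ≤ K)}
    have hBad := card_filter_cycleType_swap_mul_ne_le hK a b
    rw [Fintype.card_fin] at hBad
    calc _ ≤ ℙ {ω | π ω ∈ Bad} := measure_mono fun ω hω => by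
          simp only [swapIfOdd, Set.mem_ofPred_eq] at hω
          split_ifs at hω
          · exact absurd rfl hω
          · simpa [Bad] using hω
      _ ≤ ((4 * K * (n - 1)! : ℕ) : ℝ≥0∞) * (n ! : ℝ≥0∞)⁻¹ := by
          rw [hprob]
          gcongr
      _ = ENNReal.ofReal (4 * K / n) := by
          rw [← div_eq_mul_inv, ← ENNReal.ofReal_natCast, ← ENNReal.ofReal_natCast,
            ← ENNReal.ofReal_div_of_pos (by positivity), ← mul_factorial_pred (by omega : n ≠ 0)]
          congr 1
          have : ((n - 1)! : ℝ) ≠ 0 := by positivity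
          push_cast
          field_simp
end
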